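/- Let H be an atomic monoid, T the set of non-prime atoms of H_red. The monoid of relations M_H is a Krull monoid whose class group is isomorphic to the quotient group q([T]) of the submonoid of H_red generated by T, and the set of classes containing prime divisors is {[v], [v]^{-1} : v ∈ T} ∪ {1} if H_red has at least one prime element, and {[v], [v]^{-1} : v ∈ T} otherwise. In particular, the set of classes containing primes is finite if and only if T is finite. -/

import Mathlib

open Multiset
open scoped Classical ENNReal

/-- The set of atoms (irreducible elements) of a reduced monoid `M`. -/
abbrev Atom (M : Type) [CancelCommMonoid M] : Type := {u : M // Irreducible u}

/-- The factorization homomorphism `π : Z(H) → H`, where the factorization monoid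
`Z(H)` is realized as the free commutative monoid (multiset) over the atoms. -/
def fprod {M : Type} [CancelCommMonoid M] (z : Multiset (Atom M)) : M :=
  (z.map Subtype.val).prod

/-- The set of factorizations `Z(a)` of `a`. -/
def Zf {M : Type} [CancelCommMonoid M] (a : M) : Set (Multiset (Atom M)) :=
  {z | fprod z = a}

/-- `M` is reduced: the only unit is `1`. -/
def Reduced (M : Type) [CancelCommMonoid M] : Prop := ∀ u : M, IsUnit u → u = 1

/-- `M` is atomic: every non-unit is a product of atoms. -/
def Atomic (M : Type) [CancelCommMonoid M] : Prop :=
  ∀ a : M, ¬ IsUnit a → ∃ z : Multiset (Atom M), fprod z = a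

/-- The distance between two factorizations. -/
noncomputable def fdist {M : Type} [CancelCommMonoid M] (z z' : Multiset (Atom M)) : ℕ :=
  max (card (z - z')) (card (z' - z))

/-- The catenary degree `c(a)`: the least `N` such that any two factorizations of `a`
can be concatenated by an `N`-chain of factorizations of `a`. -/
noncomputable def cat {M : Type} [CancelCommMonoid M] (a : M) : ℕ∞ :=
  sInf {N : ℕ∞ | ∀ z ∈ Zf a, ∀ z' ∈ Zf a,
    Relation.ReflTransGen (fun u v => v ∈ Zf a ∧ (fdist u v : ℕ∞) ≤ N) z z'}

/-- The catenary degree `c(H)`. -/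
noncomputable def catH (M : Type) [CancelCommMonoid M] : ℕ∞ := ⨆ a : M, cat a

/-- The `R`-relation on factorizations of `a`: two factorizations are `R`-related if
they can be joined by a chain of factorizations of `a` whose consecutive members have a
common atom (the degenerate case `z = z' = 1` is the reflexivity case). -/
def RRel {M : Type} [CancelCommMonoid M] (a : M) :
    Multiset (Atom M) → Multiset (Atom M) → Prop :=
  Relation.ReflTransGen (fun u v => u ∈ Zf a ∧ v ∈ Zf a ∧ u ∩ v ≠ 0)

/-- `|R_a| ≥ 2`: `a` has at least two `R`-equivalence classes of factorizations. -/
def TwoClasses {M : Type} [CancelCommMonoid M] (a : M) : Prop :=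
  ∃ z ∈ Zf a, ∃ z' ∈ Zf a, ¬ RRel a z z'

/-- `μ(a)`: the supremum over the `R`-classes `ρ` of `Z(a)` of `min {|z| : z ∈ ρ}`. -/
noncomputable def mu {M : Type} [CancelCommMonoid M] (a : M) : ℕ∞ :=
  ⨆ z ∈ Zf a, ⨅ w ∈ {w | w ∈ Zf a ∧ RRel a z w}, (card w : ℕ∞)

/-- `μ(H) = sup {μ(a) : a ∈ H, |R_a| ≥ 2}`. -/
noncomputable def muH (M : Type) [CancelCommMonoid M] : ℕ∞ :=
  ⨆ a : M, ⨆ (_ : TwoClasses a), mu a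

/-- The monoid of relations `M_H ⊆ Z(H) × Z(H)`. -/
def MHset (M : Type) [CancelCommMonoid M] :
    Set (Multiset (Atom M) × Multiset (Atom M)) :=
  {p | fprod p.1 = fprod p.2}

/-- Atoms of the (reduced) monoid of relations `M_H`. -/
def IsRelAtom {M : Type} [CancelCommMonoid M]
    (p : Multiset (Atom M) × Multiset (Atom M)) : Prop :=
  p ∈ MHset M ∧ p ≠ 0 ∧
    ∀ q r, q ∈ MHset M → r ∈ MHset M → p = q + r → q = 0 ∨ r = 0

/-- An atom of (the reduced monoid) `M` which is a prime element. -/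
def IsPrimeAtom {M : Type} [CancelCommMonoid M] (u : Atom M) : Prop :=
  ∀ a b : M, u.1 ∣ a * b → u.1 ∣ a ∨ u.1 ∣ b

/-- The set `T` of non-prime atoms, as a subtype. -/
abbrev Tt (M : Type) [CancelCommMonoid M] : Type := {u : Atom M // ¬ IsPrimeAtom u}

/-- The set `P` of prime atoms, as a subtype. -/
abbrev Pt (M : Type) [CancelCommMonoid M] : Type := {u : Atom M // IsPrimeAtom u}

/-- The basis elements (prime divisors) of the free monoid `F(P) × F(T) × F(T)`. -/
def IsBasisEl {M : Type} [CancelCommMonoid M]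
    (e : Multiset (Pt M) × Multiset (Tt M) × Multiset (Tt M)) : Prop :=
  (∃ p, e = ({p}, 0, 0)) ∨ (∃ t, e = (0, {t}, 0)) ∨ (∃ t, e = (0, 0, {t}))

/-- The embedding of `F(P) × F(T) × F(T)` back into `Z(H) × Z(H)`,
`(q, x, y) ↦ (qx, qy)`. -/
def iotaF {M : Type} [CancelCommMonoid M]
    (f : Multiset (Pt M) × Multiset (Tt M) × Multiset (Tt M)) :
    Multiset (Atom M) × Multiset (Atom M) :=
  (f.1.map Subtype.val + f.2.1.map Subtype.val, f.1.map Subtype.val + f.2.2.map Subtype.val)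

/-- The congruence on `F(P) × F(T) × F(T)` defining the class group of `M_H` under the
divisor theory `φ`: two elements are equivalent iff they differ (in the quotient group)
by an element of `q(φ(M_H))`.  The quotient `Quot clsRel` is the class group of `M_H`. -/
def clsRel {M : Type} [CancelCommMonoid M]
    (f g : Multiset (Pt M) × Multiset (Tt M) × Multiset (Tt M)) : Prop :=
  ∃ a b, a ∈ MHset M ∧ b ∈ MHset M ∧ iotaF f + a = iotaF g + b

/-- The congruence realizing the quotient group `q([T])` of the submonoid of `H`
generated by `T`: pairs `(x, y)` (representing fractions `π(x)π(y)⁻¹`) are equivalent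
iff the corresponding fractions agree in `q(H)`.  `Quot qTRel` is `q([T])`. -/
def qTRel {M : Type} [CancelCommMonoid M]
    (x y : Multiset (Tt M) × Multiset (Tt M)) : Prop :=
  fprod (x.1.map Subtype.val + y.2.map Subtype.val) =
    fprod (y.1.map Subtype.val + x.2.map Subtype.val)

/-! `M_H` is saturated in the free monoid `Z(H) × Z(H)`: if `p ≤ q` are relations then so is
`q - p`, by cancellativity. Hence `M_H` is a Krull monoid. Under the divisor theory, elements
`(q, x, y)` and `(q', x', y')` of `F(P) × F(T) × F(T)` have the same class iff
`π(x) π(y') = π(x') π(y)`: the prime part cancels and relations contribute nothing, so the class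
of `(q, x, y)` is `π(x) π(y)⁻¹ ∈ q([T])`. The prime divisors `(p, 0, 0)`, `(0, v, 0)`, `(0, 0, v)`
have classes `1`, `[v]` and `[v]⁻¹`, and `v ↦ [v]` is injective. -/

section CrossMultiplication
variable {α : Type*} [CancelCommMonoid α]

theorem mul_cross_trans {a b c d e f : α} (h₁ : a * d = c * b) (h₂ : c * f = e * d) :
    a * f = e * b := by
  apply mul_right_cancel (b := c * d)
  calc a * f * (c * d) = (a * d) * (c * f) := by ac_rfl
    _ = (c * b) * (e * d) := by rw [h₁, h₂]
    _ = e * b * (c * d) := by ac_rfl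

theorem mul_cross_of_mul_eq_mul {q q' x x' y y' s s' : α}
    (hx : q * x * s = q' * x' * s') (hy : q * y * s = q' * y' * s') : x * y' = x' * y := by
  apply mul_left_cancel (a := q * q' * s * s')
  calc q * q' * s * s' * (x * y') = (q * x * s) * (q' * y' * s') := by ac_rfl
    _ = (q' * x' * s') * (q * y * s) := by rw [hx, hy]
    _ = q * q' * s * s' * (x' * y) := by ac_rfl

end CrossMultiplication

noncomputable def Multiset.prodToFinsupp (α : Type*) :
    Multiset α × Multiset α ≃+ (α ⊕ α →₀ ℕ) :=
  (Multiset.toFinsupp.prodCongr Multiset.toFinsupp).trans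
    Finsupp.sumFinsuppAddEquivProdFinsupp.symm

theorem Multiset.prodToFinsupp_le_iff {α : Type*} {p q : Multiset α × Multiset α} :
    prodToFinsupp α p ≤ prodToFinsupp α q ↔ p ≤ q := by
  simp [prodToFinsupp, AddEquiv.prodCongr, Finsupp.le_def, Sum.forall, Prod.le_def, le_iff_count]

section RelationMonoid
variable {M : Type} [CancelCommMonoid M]

theorem fprod_add (x y : Multiset (Atom M)) : fprod (x + y) = fprod x * fprod y := by
  simp [fprod]

theorem sub_mem_MHset {p q : Multiset (Atom M) × Multiset (Atom M)} (hp : p ∈ MHset M)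
    (hq : q ∈ MHset M) (hpq : p ≤ q) : q - p ∈ MHset M := by
  have hsum : fprod p.1 * fprod (q - p).1 = fprod p.2 * fprod (q - p).2 := by
    rw [← fprod_add, ← fprod_add, ← Prod.fst_add, ← Prod.snd_add, add_tsub_cancel_of_le hpq]
    exact hq
  rw [hp] at hsum
  exact mul_left_cancel hsum

theorem MHset_isKrull :
    ∃ (ι : Type) (ψ : Multiset (Atom M) × Multiset (Atom M) → ι →₀ ℕ),
      (∀ p ∈ MHset M, ∀ q ∈ MHset M, ψ (p + q) = ψ p + ψ q) ∧
      (∀ p ∈ MHset M, ∀ q ∈ MHset M, ψ p ≤ ψ q → ∃ r ∈ MHset M, p + r = q) :=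
  ⟨_, Multiset.prodToFinsupp (Atom M), fun p _ q _ => map_add _ p q,
    fun p hp q hq hle =>
      have hpq := Multiset.prodToFinsupp_le_iff.mp hle
      ⟨q - p, sub_mem_MHset hp hq hpq, add_tsub_cancel_of_le hpq⟩⟩

theorem qTRel_iff {x y : Multiset (Tt M) × Multiset (Tt M)} :
    qTRel x y ↔ fprod (x.1.map Subtype.val) * fprod (y.2.map Subtype.val) =
      fprod (y.1.map Subtype.val) * fprod (x.2.map Subtype.val) := by
  simp only [qTRel, fprod_add]

theorem qTRel_equivalence : Equivalence (qTRel (M := M)) where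
  refl _ := rfl
  symm h := h.symm
  trans h₁ h₂ := qTRel_iff.mpr (mul_cross_trans (qTRel_iff.mp h₁) (qTRel_iff.mp h₂))

theorem mk_eq_mk_iff_qTRel {x y : Multiset (Tt M) × Multiset (Tt M)} :
    Quot.mk qTRel x = Quot.mk qTRel y ↔ qTRel x y :=
  Quot.eq.trans qTRel_equivalence.eqvGen_iff

theorem clsRel_iff_qTRel {f g : Multiset (Pt M) × Multiset (Tt M) × Multiset (Tt M)} :
    clsRel f g ↔ qTRel f.2 g.2 := by
  constructor
  · rintro ⟨a, b, ha, hb, heq⟩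
    have h₁ := congrArg (fprod ∘ Prod.fst) heq
    have h₂ := congrArg (fprod ∘ Prod.snd) heq
    simp only [Function.comp_apply, iotaF, Prod.fst_add, Prod.snd_add, fprod_add] at h₁ h₂
    rw [ha, hb] at h₁
    exact qTRel_iff.mpr (mul_cross_of_mul_eq_mul h₁ h₂)
  · intro h
    -- `(q' x' y', q' x' y')` is a trivial relation, and `(q x y', q x' y)` is one by `h`
    refine ⟨(g.1.map Subtype.val + g.2.1.map Subtype.val + g.2.2.map Subtype.val,
             g.1.map Subtype.val + g.2.1.map Subtype.val + g.2.2.map Subtype.val),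
            (f.1.map Subtype.val + f.2.1.map Subtype.val + g.2.2.map Subtype.val,
             f.1.map Subtype.val + g.2.1.map Subtype.val + f.2.2.map Subtype.val), rfl, ?_, ?_⟩
    · show fprod _ = fprod _
      simp only [add_assoc, fprod_add, qTRel_iff.mp h]
    · simp only [iotaF, Prod.mk_add_mk, Prod.mk.injEq]
      constructor <;> abel

noncomputable def clsRelEquiv : Quot (clsRel (M := M)) ≃ Quot (qTRel (M := M)) :=
  (Quot.congrRight fun _ _ => clsRel_iff_qTRel.trans mk_eq_mk_iff_qTRel.symm).trans
    (Setoid.quotientKerEquivOfSurjective (fun f => Quot.mk qTRel f.2)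
      (Quot.ind fun x => ⟨(0, x), rfl⟩))

theorem clsRelEquiv_mk (f : Multiset (Pt M) × Multiset (Tt M) × Multiset (Tt M)) :
    clsRelEquiv (Quot.mk _ f) = Quot.mk _ f.2 :=
  rfl

variable (M) in
def primeDivisorClasses : Set (Quot (qTRel (M := M))) :=
  {c | ∃ f, IsBasisEl f ∧ c = Quot.mk _ f.2}

theorem primeDivisorClasses_eq : primeDivisorClasses M =
    {c | (∃ t : Tt M, c = Quot.mk _ ({t}, 0) ∨ c = Quot.mk _ (0, {t})) ∨
      ((∃ u : Atom M, IsPrimeAtom u) ∧ c = Quot.mk _ (0, 0))} := by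
  ext c
  constructor
  · rintro ⟨f, ⟨p, rfl⟩ | ⟨t, rfl⟩ | ⟨t, rfl⟩, rfl⟩
    · exact Or.inr ⟨⟨p.1, p.2⟩, rfl⟩
    · exact Or.inl ⟨t, Or.inl rfl⟩
    · exact Or.inl ⟨t, Or.inr rfl⟩
  · rintro (⟨t, rfl | rfl⟩ | ⟨⟨u, hu⟩, rfl⟩)
    · exact ⟨(0, {t}, 0), Or.inr (Or.inl ⟨t, rfl⟩), rfl⟩
    · exact ⟨(0, 0, {t}), Or.inr (Or.inr ⟨t, rfl⟩), rfl⟩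
    · exact ⟨({⟨u, hu⟩}, 0, 0), Or.inl ⟨⟨u, hu⟩, rfl⟩, rfl⟩

theorem mk_singleton_zero_injective :
    Function.Injective fun t : Tt M =>
      Quot.mk qTRel (({t} : Multiset (Tt M)), (0 : Multiset (Tt M))) := by
  intro t t' h
  have h' := qTRel_iff.mp (mk_eq_mk_iff_qTRel.mp h)
  simp only [fprod, Multiset.map_singleton, Multiset.map_zero, Multiset.prod_singleton,
    Multiset.prod_zero, mul_one] at h'
  exact Subtype.ext (Subtype.ext h')

theorem primeDivisorClasses_finite_iff : (primeDivisorClasses M).Finite ↔ Finite (Tt M) := by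
  constructor
  · intro hfin
    refine (Set.finite_range_iff mk_singleton_zero_injective).mp (hfin.subset ?_)
    rintro _ ⟨t, rfl⟩
    exact ⟨(0, {t}, 0), Or.inr (Or.inl ⟨t, rfl⟩), rfl⟩
  · intro hT
    refine (((Set.finite_range fun t : Tt M => Quot.mk qTRel ({t}, 0)).union
      (Set.finite_range fun t : Tt M => Quot.mk qTRel (0, {t}))).union
      (Set.finite_singleton (Quot.mk qTRel 0))).subset ?_
    rintro _ ⟨f, ⟨p, rfl⟩ | ⟨t, rfl⟩ | ⟨t, rfl⟩, rfl⟩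
    · exact Or.inr rfl
    · exact Or.inl (Or.inl ⟨t, rfl⟩)
    · exact Or.inl (Or.inr ⟨t, rfl⟩)

end RelationMonoid

theorem MHset_krull_classGroup_general (M : Type) [CancelCommMonoid M] :
    (∃ (ι : Type) (ψ : Multiset (Atom M) × Multiset (Atom M) → ι →₀ ℕ),
      (∀ p ∈ MHset M, ∀ q ∈ MHset M, ψ (p + q) = ψ p + ψ q) ∧
      (∀ p ∈ MHset M, ∀ q ∈ MHset M, ψ p ≤ ψ q → ∃ r ∈ MHset M, p + r = q)) ∧
    (∃ e : Quot (clsRel (M := M)) ≃ Quot (qTRel (M := M)),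
      ∀ f, e (Quot.mk _ f) = Quot.mk _ f.2) ∧
    ({c : Quot (qTRel (M := M)) | ∃ f, IsBasisEl f ∧ c = Quot.mk _ f.2} =
      {c : Quot (qTRel (M := M)) |
        (∃ t : Tt M, c = Quot.mk _ ({t}, 0) ∨ c = Quot.mk _ (0, {t})) ∨
        ((∃ u : Atom M, IsPrimeAtom u) ∧ c = Quot.mk _ (0, 0))}) ∧
    ({c : Quot (qTRel (M := M)) | ∃ f, IsBasisEl f ∧ c = Quot.mk _ f.2}.Finite ↔
      Finite (Tt M)) :=
  ⟨MHset_isKrull, ⟨clsRelEquiv, clsRelEquiv_mk⟩, primeDivisorClasses_eq,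
    primeDivisorClasses_finite_iff⟩

/-- **Lemma 4.2.3.** `M_H` is a Krull monoid; its class group (the quotient of
`F(P) × F(T) × F(T)` by `q(φ(M_H))`) is isomorphic to `q([T])` via the natural map
`(q, x, y) ↦ π(x)π(y)⁻¹`; the set of classes containing prime divisors is
`{[v], [v]⁻¹ : v ∈ T} ∪ {1}` if `H` possesses a prime element and
`{[v], [v]⁻¹ : v ∈ T}` otherwise; and this set is finite iff `T` is finite. -/
theorem MHset_krull_classGroup (M : Type) [CancelCommMonoid M]
    (hred : Reduced M) (hat : Atomic M) :
    (∃ (ι : Type) (ψ : Multiset (Atom M) × Multiset (Atom M) → ι →₀ ℕ),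
      (∀ p ∈ MHset M, ∀ q ∈ MHset M, ψ (p + q) = ψ p + ψ q) ∧
      (∀ p ∈ MHset M, ∀ q ∈ MHset M, ψ p ≤ ψ q → ∃ r ∈ MHset M, p + r = q)) ∧
    (∃ e : Quot (clsRel (M := M)) ≃ Quot (qTRel (M := M)),
      ∀ f, e (Quot.mk _ f) = Quot.mk _ f.2) ∧
    ({c : Quot (qTRel (M := M)) | ∃ f, IsBasisEl f ∧ c = Quot.mk _ f.2} =
      {c : Quot (qTRel (M := M)) |
        (∃ t : Tt M, c = Quot.mk _ ({t}, 0) ∨ c = Quot.mk _ (0, {t})) ∨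
        ((∃ u : Atom M, IsPrimeAtom u) ∧ c = Quot.mk _ (0, 0))}) ∧
    ({c : Quot (qTRel (M := M)) | ∃ f, IsBasisEl f ∧ c = Quot.mk _ f.2}.Finite ↔
      Finite (Tt M)) :=
  MHset_krull_classGroup_general M
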